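/- arXiv:0910.2010 — 5 statements merged into one kernel-verified Lean document; each statement's English description precedes it below -/
import Mathlib

section
/- Let R be a commutative ring, g ≥ 0, and let M₀,…,M_{2g} be R-modules with maps V : M_i → M_{i−1} and H : M_i → M_{i+1} (with M_{−1} = M_{2g+1} = 0) satisfying VH + HV = 0, such that the sequence 0 → M_{2g} →^V M_{2g−1} →^V ⋯ →^V M₀ → ℤ → 0 is exact. Then for x ∈ M_i with i ≥ 1: Vx ∈ Im(VH) ∩ M_{i−1} if and only if x ∈ Im V + Im H; and Im(VH) ∩ M₀ = 0. -/
/-- Lemma 8.2 (first half).  The graded modules M₀,…,M_{2g} are modeled as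
submodules `M i` of an ambient module, with `M i = ⊥` outside `0 ≤ i ≤ 2g`;
`V` lowers the index by one, `H` raises it by one, and `VH + HV = 0`.
The exactness of `0 → M_{2g} →V ⋯ →V M₀ → ℤ → 0` is expressed by `hinj`,
`hexact`, `hsurj`, `hker` (with `ε : M₀ → ℤ` inducing the cokernel of V).
Conclusion: for `x ∈ M i` with `i ≥ 1`, `Vx ∈ Im(VH) ∩ M_{i−1}` iff
`x ∈ Im V + Im H`; and `Im(VH) ∩ M₀ = 0`. -/
theorem stmt_4 {R Nn : Type*} [CommRing R] [AddCommGroup Nn] [Module R Nn]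
    (g : ℕ) (M : ℤ → Submodule R Nn) (V H : Nn →ₗ[R] Nn) (ε : Nn →+ ℤ)
    (hVH : ∀ x, V (H x) + H (V x) = 0)
    (hVmap : ∀ i : ℤ, ∀ x ∈ M i, V x ∈ M (i - 1))
    (hHmap : ∀ i : ℤ, ∀ x ∈ M i, H x ∈ M (i + 1))
    (htriv : ∀ i : ℤ, (i < 0 ∨ (2 * g : ℤ) < i) → M i = ⊥)
    (hinj : ∀ x ∈ M (2 * g : ℤ), V x = 0 → x = 0)
    (hexact : ∀ i : ℤ, 0 < i → i < 2 * g → ∀ x ∈ M i,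
      (V x = 0 ↔ ∃ y ∈ M (i + 1), V y = x))
    (hsurj : ∀ a : ℤ, ∃ x ∈ M 0, ε x = a)
    (hker : ∀ x ∈ M 0, (ε x = 0 ↔ ∃ y ∈ M 1, V y = x)) :
    (∀ i : ℤ, 1 ≤ i → ∀ x ∈ M i,
      ((∃ z ∈ M (i - 1), V (H z) = V x) ↔
        ∃ u ∈ M (i + 1), ∃ w ∈ M (i - 1), x = V u + H w)) ∧
    (∀ x ∈ M 0, (∃ z ∈ M 0, V (H z) = x) → x = 0) := by
  constructor
  · intro i hi x hx
    constructor
    · rintro ⟨z, hz, hVHz⟩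
      have hHz : H z ∈ M i := by simpa using hHmap (i - 1) z hz
      have hdiff : x - H z ∈ M i := Submodule.sub_mem _ hx hHz
      have hVdiff : V (x - H z) = 0 := by rw [map_sub, hVHz, sub_self]
      rcases lt_trichotomy i (2 * g : ℤ) with h | h | h
      · obtain ⟨y, hy, hVy⟩ := (hexact i (by linarith) h _ hdiff).mp hVdiff
        exact ⟨y, hy, z, hz, by rw [hVy]; abel⟩
      · have hx0 : x - H z = 0 := hinj (x - H z) (h ▸ hdiff) hVdiff
        refine ⟨0, Submodule.zero_mem _, z, hz, ?_⟩
        rw [map_zero, zero_add, ← sub_eq_zero]; exact hx0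
      · have hb : M i = ⊥ := htriv i (Or.inr h)
        have hx0 : x = 0 := by simpa [hb] using hx
        exact ⟨0, Submodule.zero_mem _, 0, Submodule.zero_mem _, by simp [hx0]⟩
    · rintro ⟨u, hu, w, hw, rfl⟩
      refine ⟨w, hw, ?_⟩
      have hVu : V u ∈ M i := by simpa using hVmap (i + 1) u hu
      have hVVu : V (V u) = 0 := by
        rcases lt_or_ge i (2 * g : ℤ) with h | h
        · exact (hexact i (by linarith) h _ hVu).mpr ⟨u, hu, rfl⟩
        · have hb : M (i + 1) = ⊥ := htriv (i + 1) (Or.inr (by linarith))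
          have : u = 0 := by simpa [hb] using hu
          simp [this]
      rw [map_add, hVVu, zero_add]
  · rintro x hx ⟨z, hz, hVHz⟩
    have hVz : V z ∈ M (-1 : ℤ) := by simpa using hVmap 0 z hz
    have hVz0 : V z = 0 := by simpa [htriv (-1) (Or.inl (by norm_num))] using hVz
    have := hVH z
    rw [hVz0, map_zero, add_zero] at this
    rw [← hVHz, this]
end

section
/- Let R be a commutative ring, g ≥ 1, and let M₀,…,M_{2g} be R-modules with anticommuting differentials V : M_i → M_{i−1}, H : M_i → M_{i+1} (VH + HV = 0), such that 0 → M_{2g} →^V ⋯ →^V M₀ → ℤ → 0 is exact. Consider the complex C = M₀ ⊕ M₂ ⊕ ⋯ ⊕ M_{2g}, with an element x = (x₀, x₂, …, x_{2g}). Then x arises as a 'boundary', i.e., there exist y₁, y₃, …, y_{2g−1}, y_{2g+1} = 0 with V y₁ = x₀ and V y_{2i+1} = x_{2i} + H y_{2i−1} for 0 < i ≤ g, if and only if x₀ ∈ Im V and V x_{2i+2} = H x_{2i} for all 0 ≤ i < g. -/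
/-- The solvability criterion from the proof of Proposition 8.3 (even levels).
Data as in the abstract setting: submodules `M i` (trivial outside `0 ≤ i ≤ 2g`),
anticommuting differentials `V` (index −1) and `H` (index +1) with `V² = H² = 0`,
and the row `0 → M_{2g} →V ⋯ →V M₀ → ℤ → 0` exact.
An element `x = (x₀, x₂, …, x_{2g})` (here `x (2*k)` is the component in `M (2*k)`)
is a 'boundary', i.e. there exist `y₁, y₃, …, y_{2g+1} = 0` with `V y₁ = x₀` and
`V y_{2k+1} = x_{2k} + H y_{2k−1}` for `0 < k ≤ g`, if and only if
`x₀ ∈ Im V` and `V x_{2k+2} = H x_{2k}` for all `0 ≤ k < g`. -/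
theorem stmt_5 {R Nn : Type*} [CommRing R] [AddCommGroup Nn] [Module R Nn]
    (g : ℕ) (hg : 1 ≤ g) (M : ℤ → Submodule R Nn) (V H : Nn →ₗ[R] Nn) (ε : Nn →+ ℤ)
    (hVH : ∀ x, V (H x) + H (V x) = 0)
    (hV2 : ∀ x, V (V x) = 0) (hH2 : ∀ x, H (H x) = 0)
    (hVmap : ∀ i : ℤ, ∀ x ∈ M i, V x ∈ M (i - 1))
    (hHmap : ∀ i : ℤ, ∀ x ∈ M i, H x ∈ M (i + 1))
    (htriv : ∀ i : ℤ, (i < 0 ∨ (2 * g : ℤ) < i) → M i = ⊥)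
    (hinj : ∀ x ∈ M (2 * g : ℤ), V x = 0 → x = 0)
    (hexact : ∀ i : ℤ, 0 < i → i < 2 * g → ∀ x ∈ M i,
      (V x = 0 ↔ ∃ y ∈ M (i + 1), V y = x))
    (hsurj : ∀ a : ℤ, ∃ x ∈ M 0, ε x = a)
    (hker : ∀ x ∈ M 0, (ε x = 0 ↔ ∃ y ∈ M 1, V y = x))
    (x : ℤ → Nn) (hx : ∀ k : ℤ, 0 ≤ k → k ≤ (g : ℤ) → x (2 * k) ∈ M (2 * k)) :
    (∃ y : ℤ → Nn,
      (∀ k : ℤ, 0 ≤ k → k ≤ (g : ℤ) → y (2 * k + 1) ∈ M (2 * k + 1)) ∧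
      y (2 * (g : ℤ) + 1) = 0 ∧ V (y 1) = x 0 ∧
      (∀ k : ℤ, 0 < k → k ≤ (g : ℤ) →
        V (y (2 * k + 1)) = x (2 * k) + H (y (2 * k - 1))))
    ↔ ((∃ z ∈ M 1, V z = x 0) ∧
        ∀ k : ℤ, 0 ≤ k → k < (g : ℤ) → V (x (2 * k + 2)) = H (x (2 * k))) := by
  have hg' : (1 : ℤ) ≤ (g : ℤ) := by exact_mod_cast hg
  -- key computation: if y satisfies the recurrences up to bound m, then
  -- H (V (y (2k+1))) = H (x (2k)) for 0 ≤ k ≤ m.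
  have key : ∀ (y : ℤ → Nn) (m : ℤ),
      V (y 1) = x 0 →
      (∀ k : ℤ, 0 < k → k ≤ m → V (y (2 * k + 1)) = x (2 * k) + H (y (2 * k - 1))) →
      ∀ k : ℤ, 0 ≤ k → k ≤ m → H (V (y (2 * k + 1))) = H (x (2 * k)) := by
    intro y m hy1 hrec k hk0 hkm
    rcases eq_or_lt_of_le hk0 with h0 | h0
    · subst h0; simpa using congrArg H hy1
    · rw [hrec k h0 hkm, map_add, hH2, add_zero]
  constructor
  · rintro ⟨y, hymem, hyg, hy1, hyrec⟩
    refine ⟨⟨y 1, by simpa using hymem 0 le_rfl (by omega), hy1⟩, ?_⟩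
    intro k hk0 hkg
    have e1 := hyrec (k + 1) (by omega) (by omega)
    have e2 : (2 : ℤ) * (k + 1) = 2 * k + 2 := by ring
    rw [e2] at e1
    have e3 : (2 : ℤ) * k + 2 - 1 = 2 * k + 1 := by ring
    rw [e3] at e1
    have e4 : V (V (y (2 * k + 2 + 1))) = 0 := hV2 _
    rw [e1, map_add] at e4
    have e5 : V (H (y (2 * k + 1))) = -(H (V (y (2 * k + 1)))) :=
      eq_neg_of_add_eq_zero_left (hVH _)
    rw [e5] at e4
    have e6 : H (V (y (2 * k + 1))) = H (x (2 * k)) :=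
      key y (g : ℤ) hy1 hyrec k hk0 (by omega)
    rw [e6, ← sub_eq_add_neg] at e4
    exact sub_eq_zero.mp e4
  · rintro ⟨⟨z, hz, hz0⟩, hcomp⟩
    -- build the partial solutions by induction
    have aux : ∀ m : ℕ, (m : ℤ) < (g : ℤ) → ∃ y : ℤ → Nn,
        (∀ k : ℤ, 0 ≤ k → k ≤ (m : ℤ) → y (2 * k + 1) ∈ M (2 * k + 1)) ∧
        V (y 1) = x 0 ∧
        (∀ k : ℤ, 0 < k → k ≤ (m : ℤ) →
          V (y (2 * k + 1)) = x (2 * k) + H (y (2 * k - 1))) := by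
      intro m
      induction m with
      | zero =>
        intro _
        refine ⟨fun _ => z, ?_, hz0, ?_⟩
        · intro k hk0 hk1
          have : k = 0 := by omega
          subst this; simpa using hz
        · intro k hk0 hk1; omega
      | succ m ih =>
        intro hm1
        obtain ⟨y, hymem, hy1, hyrec⟩ := ih (by push_cast at hm1 ⊢; omega)
        -- the element we must hit
        set u : Nn := x (2 * ((m : ℤ) + 1)) + H (y (2 * (m : ℤ) + 1)) with hu
        have hmem : u ∈ M (2 * ((m : ℤ) + 1)) := by
          refine add_mem (hx _ (by omega) (by push_cast at hm1; omega)) ?_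
          have := hHmap (2 * (m : ℤ) + 1) _ (hymem m (Int.natCast_nonneg m) le_rfl)
          have e : (2 : ℤ) * (m : ℤ) + 1 + 1 = 2 * ((m : ℤ) + 1) := by ring
          rw [e] at this; exact this
        have hVu : V u = 0 := by
          have h1 : V (x (2 * ((m : ℤ) + 1))) = H (x (2 * (m : ℤ))) := by
            have := hcomp (m : ℤ) (by omega) (by push_cast at hm1; omega)
            have e : (2 : ℤ) * (m : ℤ) + 2 = 2 * ((m : ℤ) + 1) := by ring
            rw [e] at this; exact this
          have h2 : H (V (y (2 * (m : ℤ) + 1))) = H (x (2 * (m : ℤ))) :=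
            key y (m : ℤ) hy1 hyrec (m : ℤ) (by omega) le_rfl
          have h3 := hVH (y (2 * (m : ℤ) + 1))
          rw [hu, map_add, h1]
          have : V (H (y (2 * (m : ℤ) + 1))) = -(H (x (2 * (m : ℤ)))) := by
            rw [← h2]; exact eq_neg_of_add_eq_zero_left h3
          rw [this]; abel
        obtain ⟨w, hwmem, hwV⟩ :=
          (hexact (2 * ((m : ℤ) + 1)) (by omega) (by push_cast at hm1 ⊢; omega) u hmem).mp hVu
        refine ⟨Function.update y (2 * ((m : ℤ) + 1) + 1) w, ?_, ?_, ?_⟩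
        · intro k hk0 hkm
          rcases eq_or_lt_of_le hkm with h | h
          · have : (2 : ℤ) * k + 1 = 2 * ((m : ℤ) + 1) + 1 := by push_cast at h ⊢; omega
            rw [this, Function.update_self]; exact hwmem
          · rw [Function.update_of_ne (by push_cast at h ⊢; omega)]
            exact hymem k hk0 (by push_cast at h ⊢; omega)
        · rw [Function.update_of_ne (by omega)]; exact hy1
        · intro k hk0 hkm
          rcases eq_or_lt_of_le hkm with h | h
          · have e1 : (2 : ℤ) * k + 1 = 2 * ((m : ℤ) + 1) + 1 := by push_cast at h ⊢; omega
            have e2 : (2 : ℤ) * k - 1 = 2 * (m : ℤ) + 1 := by push_cast at h ⊢; omega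
            have e3 : (2 : ℤ) * k = 2 * ((m : ℤ) + 1) := by push_cast at h ⊢; omega
            rw [e1, e2, e3, Function.update_self,
              Function.update_of_ne (by omega)]
            exact hwV
          · rw [Function.update_of_ne (by push_cast at h ⊢; omega),
              Function.update_of_ne (by push_cast at h ⊢; omega)]
            exact hyrec k hk0 (by push_cast at h ⊢; omega)
    obtain ⟨y, hymem, hy1, hyrec⟩ := aux (g - 1) (by omega)
    have hc : ((g - 1 : ℕ) : ℤ) = (g : ℤ) - 1 := by omega
    rw [hc] at hymem hyrec
    refine ⟨Function.update y (2 * (g : ℤ) + 1) 0, ?_, Function.update_self _ _ _, ?_, ?_⟩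
    · intro k hk0 hkg
      rcases eq_or_lt_of_le hkg with h | h
      · have : (2 : ℤ) * k + 1 = 2 * (g : ℤ) + 1 := by omega
        rw [this, Function.update_self]; exact zero_mem _
      · rw [Function.update_of_ne (by omega)]
        exact hymem k hk0 (by omega)
    · rw [Function.update_of_ne (by omega)]; exact hy1
    · intro k hk0 hkg
      rcases eq_or_lt_of_le hkg with h | h
      · have e1 : (2 : ℤ) * k + 1 = 2 * (g : ℤ) + 1 := by omega
        have e2 : (2 : ℤ) * k - 1 = 2 * ((g : ℤ) - 1) + 1 := by omega
        have e3 : (2 : ℤ) * k = 2 * (g : ℤ) := by omega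
        rw [e1, e2, e3, Function.update_self,
          Function.update_of_ne (by omega)]
        -- show 0 = x (2g) + H (y (2(g-1)+1)) via injectivity on M (2g)
        have hmem : x (2 * (g : ℤ)) + H (y (2 * ((g : ℤ) - 1) + 1)) ∈ M (2 * (g : ℤ)) := by
          refine add_mem (hx _ (by omega) le_rfl) ?_
          have := hHmap (2 * ((g : ℤ) - 1) + 1) _ (hymem ((g : ℤ) - 1) (by omega) le_rfl)
          have e : (2 : ℤ) * ((g : ℤ) - 1) + 1 + 1 = 2 * (g : ℤ) := by ring
          rw [e] at this; exact this
        have hVu : V (x (2 * (g : ℤ)) + H (y (2 * ((g : ℤ) - 1) + 1))) = 0 := by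
          have h1 : V (x (2 * (g : ℤ))) = H (x (2 * ((g : ℤ) - 1))) := by
            have := hcomp ((g : ℤ) - 1) (by omega) (by omega)
            have e : (2 : ℤ) * ((g : ℤ) - 1) + 2 = 2 * (g : ℤ) := by ring
            rw [e] at this; exact this
          have h2 : H (V (y (2 * ((g : ℤ) - 1) + 1))) = H (x (2 * ((g : ℤ) - 1))) :=
            key y ((g : ℤ) - 1) hy1 hyrec ((g : ℤ) - 1) (by omega) le_rfl
          have h3 := hVH (y (2 * ((g : ℤ) - 1) + 1))
          rw [map_add, h1]
          have : V (H (y (2 * ((g : ℤ) - 1) + 1))) = -(H (x (2 * ((g : ℤ) - 1)))) := by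
            rw [← h2]; exact eq_neg_of_add_eq_zero_left h3
          rw [this]; abel
        have := hinj _ hmem hVu
        rw [map_zero, ← this]
      · rw [Function.update_of_ne (by omega), Function.update_of_ne (by omega)]
        exact hyrec k hk0 (by omega)
end

section
/- With data as in the abstract setting (R-modules M₀,…,M_{2g}, anticommuting V, H, with 0 → M_{2g} →^V ⋯ →^V M₀ → ℤ → 0 exact): the quotient of the module of 'cycles' {x = (x₀,…,x_{2g}) : V x_{2i+2} = H x_{2i} for 0 ≤ i < g} by the submodule of 'boundaries' {x : x₀ ∈ Im V and V x_{2i+2} = H x_{2i} for 0 ≤ i < g} is isomorphic to M₀ / Im(V : M₁ → M₀) ≅ ℤ. -/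
/-- Proposition 8.3, even-level conclusion: the quotient of cycles
`{x : V x_{2k+2} = H x_{2k} for 0 ≤ k < g}` by boundaries
`{x cycle : x₀ ∈ Im V}` is isomorphic to `M₀ / Im V ≅ ℤ`, via `x ↦ ε(x₀)`.
Concretely: every `a ∈ ℤ` is realized as `ε(x₀)` for some cycle `x`, and a
cycle `x` is a boundary (i.e. `x₀ ∈ Im(V : M₁ → M₀)`) iff `ε(x₀) = 0`. -/
theorem stmt_6 {R Nn : Type*} [CommRing R] [AddCommGroup Nn] [Module R Nn]
    (g : ℕ) (M : ℤ → Submodule R Nn) (V H : Nn →ₗ[R] Nn) (ε : Nn →+ ℤ)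
    (hVH : ∀ x, V (H x) + H (V x) = 0)
    (hV2 : ∀ x, V (V x) = 0) (hH2 : ∀ x, H (H x) = 0)
    (hVmap : ∀ i : ℤ, ∀ x ∈ M i, V x ∈ M (i - 1))
    (hHmap : ∀ i : ℤ, ∀ x ∈ M i, H x ∈ M (i + 1))
    (htriv : ∀ i : ℤ, (i < 0 ∨ (2 * g : ℤ) < i) → M i = ⊥)
    (hinj : ∀ x ∈ M (2 * g : ℤ), V x = 0 → x = 0)
    (hexact : ∀ i : ℤ, 0 < i → i < 2 * g → ∀ x ∈ M i,
      (V x = 0 ↔ ∃ y ∈ M (i + 1), V y = x))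
    (hsurj : ∀ a : ℤ, ∃ x ∈ M 0, ε x = a)
    (hker : ∀ x ∈ M 0, (ε x = 0 ↔ ∃ y ∈ M 1, V y = x)) :
    (∀ a : ℤ, ∃ x : ℤ → Nn,
      (∀ k : ℤ, 0 ≤ k → k ≤ (g : ℤ) → x (2 * k) ∈ M (2 * k)) ∧
      (∀ k : ℤ, 0 ≤ k → k < (g : ℤ) → V (x (2 * k + 2)) = H (x (2 * k))) ∧
      ε (x 0) = a) ∧
    (∀ x : ℤ → Nn,
      (∀ k : ℤ, 0 ≤ k → k ≤ (g : ℤ) → x (2 * k) ∈ M (2 * k)) →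
      (∀ k : ℤ, 0 ≤ k → k < (g : ℤ) → V (x (2 * k + 2)) = H (x (2 * k))) →
      (ε (x 0) = 0 ↔ ∃ z ∈ M 1, V z = x 0)) := by
  constructor
  · intro a
    obtain ⟨x₀, hx₀, hεx₀⟩ := hsurj a
    -- build the chain by induction
    have key : ∀ n : ℕ, n ≤ g → ∃ f : ℕ → Nn, f 0 = x₀ ∧
        (∀ k : ℕ, k ≤ n → f k ∈ M (2 * k)) ∧
        (∀ k : ℕ, k < n → V (f (k + 1)) = H (f k)) ∧
        V (H (f n)) = 0 := by
      intro n
      induction n with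
      | zero =>
        intro _
        refine ⟨fun _ => x₀, rfl, fun k hk => by simpa [Nat.le_zero.mp hk] using hx₀,
          fun k hk => absurd hk (Nat.not_lt_zero k), ?_⟩
        have hVx₀ : V x₀ = 0 := by
          have := hVmap 0 x₀ hx₀
          rw [show (0:ℤ) - 1 = -1 by norm_num, htriv (-1) (Or.inl (by norm_num))] at this
          simpa using this
        have := hVH x₀
        rw [hVx₀] at this
        simpa using this
      | succ n ih =>
        intro hn
        obtain ⟨f, hf0, hfmem, hfstep, hfVH⟩ := ih (Nat.le_of_succ_le hn)
        have hmemn : f n ∈ M (2 * n) := hfmem n le_rfl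
        have hHmem : H (f n) ∈ M (2 * n + 1) := hHmap _ _ hmemn
        have hpos : (0 : ℤ) < 2 * n + 1 := by positivity
        have hlt : (2 * (n : ℤ) + 1) < 2 * g := by
          have : (n : ℤ) + 1 ≤ g := by exact_mod_cast hn
          omega
        obtain ⟨y, hy, hVy⟩ := (hexact _ hpos hlt _ hHmem).mp hfVH
        refine ⟨fun k => if k = n + 1 then y else f k, by simp [hf0], ?_, ?_, ?_⟩
        · intro k hk
          by_cases h : k = n + 1
          · subst h
            simpa [show (2 * ((n:ℤ) + 1)) = 2 * (n:ℤ) + 1 + 1 by ring] using hy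
          · simp only [h, if_false]
            exact hfmem k (by omega)
        · intro k hk
          by_cases h : k = n
          · subst h
            simp only [if_pos rfl, if_neg (by omega : k ≠ k + 1)]
            exact hVy
          · simp only [if_neg (by omega : k + 1 ≠ n + 1), if_neg (by omega : k ≠ n + 1)]
            exact hfstep k (by omega)
        · simp only [if_pos rfl]
          have := hVH y
          rw [hVy, hH2] at this
          simpa using this
    obtain ⟨f, hf0, hfmem, hfstep, _⟩ := key g le_rfl
    refine ⟨fun i => f (i.toNat / 2), ?_, ?_, by simpa [hf0] using hεx₀⟩
    · intro k hk0 hkg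
      have h1 : ((2 * k).toNat / 2) = k.toNat := by omega
      have h2 : (2 * k) = 2 * (k.toNat : ℤ) := by omega
      show f ((2 * k).toNat / 2) ∈ M (2 * k)
      rw [h1, h2]
      exact_mod_cast hfmem k.toNat (by omega)
    · intro k hk0 hkg
      have h1 : ((2 * k + 2).toNat / 2) = k.toNat + 1 := by omega
      have h2 : ((2 * k).toNat / 2) = k.toNat := by omega
      show V (f ((2 * k + 2).toNat / 2)) = H (f ((2 * k).toNat / 2))
      rw [h1, h2]
      exact hfstep k.toNat (by omega)
  · intro x hmem _
    have h0 : x 0 ∈ M 0 := by simpa using hmem 0 le_rfl (by exact_mod_cast Nat.zero_le g)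
    exact hker _ h0
end

section
/- Let R be a commutative ring, g ≥ 1, M₀,…,M_{2g} R-modules with anticommuting maps V, H as before, with the row 0 → M_{2g} →^V ⋯ →^V M₀ → ℤ → 0 exact, and additionally suppose V is injective on M_{2g}. Consider x = (x₁, x₃, …, x_{2g−1}). Then x is a cycle (i.e., V x_{2i+1} = H x_{2i−1} for 0 < i ≤ g−1, and V x₁ = 0, H x_{2g−1} = 0) if and only if x is a boundary (i.e., x₁ ∈ Im V + Im H and V x_{2i+1} = H x_{2i−1} for 0 < i ≤ g−1). Consequently the corresponding homology group is trivial. -/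
/-- Proposition 8.3, odd-level computation.  With `V` additionally injective on
`M_{2g}`, an odd-level element `x = (x₁, x₃, …, x_{2g−1})` (here `x (2*k+1)` is
the component in `M (2*k+1)`, `0 ≤ k ≤ g−1`) is a cycle
(`V x_{2k+1} = H x_{2k−1}` for `0 < k ≤ g−1`, `V x₁ = 0`, `H x_{2g−1} = 0`)
iff it is a boundary (`x₁ ∈ Im V + Im H` and `V x_{2k+1} = H x_{2k−1}` for
`0 < k ≤ g−1`); consequently the odd-level homology is trivial. -/
theorem stmt_7 {R Nn : Type*} [CommRing R] [AddCommGroup Nn] [Module R Nn]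
    (g : ℕ) (hg : 1 ≤ g) (M : ℤ → Submodule R Nn) (V H : Nn →ₗ[R] Nn) (ε : Nn →+ ℤ)
    (hVH : ∀ x, V (H x) + H (V x) = 0)
    (hV2 : ∀ x, V (V x) = 0) (hH2 : ∀ x, H (H x) = 0)
    (hVmap : ∀ i : ℤ, ∀ x ∈ M i, V x ∈ M (i - 1))
    (hHmap : ∀ i : ℤ, ∀ x ∈ M i, H x ∈ M (i + 1))
    (htriv : ∀ i : ℤ, (i < 0 ∨ (2 * g : ℤ) < i) → M i = ⊥)
    (hinj : ∀ x ∈ M (2 * g : ℤ), V x = 0 → x = 0)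
    (hexact : ∀ i : ℤ, 0 < i → i < 2 * g → ∀ x ∈ M i,
      (V x = 0 ↔ ∃ y ∈ M (i + 1), V y = x))
    (hsurj : ∀ a : ℤ, ∃ x ∈ M 0, ε x = a)
    (hker : ∀ x ∈ M 0, (ε x = 0 ↔ ∃ y ∈ M 1, V y = x))
    (x : ℤ → Nn)
    (hx : ∀ k : ℤ, 0 ≤ k → k ≤ (g : ℤ) - 1 → x (2 * k + 1) ∈ M (2 * k + 1)) :
    ((∀ k : ℤ, 0 < k → k ≤ (g : ℤ) - 1 →
        V (x (2 * k + 1)) = H (x (2 * k - 1))) ∧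
      V (x 1) = 0 ∧ H (x (2 * (g : ℤ) - 1)) = 0)
    ↔ ((∃ u ∈ M 2, ∃ w ∈ M 0, x 1 = V u + H w) ∧
        ∀ k : ℤ, 0 < k → k ≤ (g : ℤ) - 1 →
          V (x (2 * k + 1)) = H (x (2 * k - 1))) := by
  constructor
  · rintro ⟨hchain, hV1, _⟩
    refine ⟨?_, hchain⟩
    have h1 : x 1 ∈ M 1 := by
      have := hx 0 le_rfl (by exact_mod_cast by omega)
      simpa using this
    obtain ⟨y, hy, hyx⟩ := (hexact 1 one_pos (by exact_mod_cast by omega) (x 1) h1).mp hV1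
    refine ⟨y, hy, 0, (M 0).zero_mem, by simp [hyx]⟩
  · rintro ⟨⟨u, hu, w, hw, hx1⟩, hchain⟩
    have hw0 : V w = 0 := by
      have h := hVmap 0 w hw
      rw [htriv (0 - 1) (Or.inl (by norm_num))] at h
      simpa using h
    have hV1 : V (x 1) = 0 := by
      have h := hVH w
      rw [hw0, map_zero, add_zero] at h
      rw [hx1, map_add, hV2, h, add_zero]
    refine ⟨hchain, hV1, ?_⟩
    have hmem : x (2 * (g : ℤ) - 1) ∈ M (2 * (g : ℤ) - 1) := by
      have h := hx ((g : ℤ) - 1) (by omega) le_rfl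
      have e : 2 * ((g : ℤ) - 1) + 1 = 2 * (g : ℤ) - 1 := by ring
      rwa [e] at h
    have hHmem : H (x (2 * (g : ℤ) - 1)) ∈ M (2 * g : ℤ) := by
      have h := hHmap _ _ hmem
      have e : 2 * (g : ℤ) - 1 + 1 = (2 * g : ℤ) := by push_cast; ring
      rwa [e] at h
    refine hinj _ hHmem ?_
    have hVx : H (V (x (2 * (g : ℤ) - 1))) = 0 := by
      rcases eq_or_lt_of_le hg with h1 | h2
      · have e : 2 * (g : ℤ) - 1 = 1 := by omega
        rw [e, hV1, map_zero]
      · have hk := hchain ((g : ℤ) - 1) (by omega) le_rfl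
        have e1 : 2 * ((g : ℤ) - 1) + 1 = 2 * (g : ℤ) - 1 := by ring
        rw [e1] at hk
        rw [hk, hH2]
    have h := hVH (x (2 * (g : ℤ) - 1))
    rw [hVx, add_zero] at h
    exact h
end

section
/- Let n ≥ 1, let p₁,…,pₙ be positive integers with lcm d, and let m be the number of indices ℓ with p_ℓ = d. Then the number of n-tuples (i₁,…,iₙ), 0 ≤ i_ℓ < p_ℓ, with ∑_ℓ i_ℓ/p_ℓ = 1/d equals m: the solutions are exactly those with i_ℓ = 1 for a single ℓ with p_ℓ = d and i_ℓ = 0 otherwise. -/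
/-!
Multiplying by `d` turns `∑ i_ℓ / p_ℓ = 1 / d` into `∑ i_ℓ (d / p_ℓ) = 1` in `ℕ`, where every
factor `d / p_ℓ` is positive. A sum of naturals equal to `1` has a single nonzero term, equal to
`1`, so `i_ℓ = d / p_ℓ = 1` at one index and `i = 0` elsewhere; `d / p_ℓ = 1` means `p_ℓ = d`.
-/

theorem Fintype.sum_eq_one_iff_eq_pi_single {ι : Type*} [Fintype ι] [DecidableEq ι] (a : ι → ℕ) :
    ∑ ℓ, a ℓ = 1 ↔ ∃ ℓ₀, a = Pi.single ℓ₀ 1 := by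
  have key := Finsupp.sum_eq_one_iff (Finsupp.equivFunOnFinite.symm a)
  rw [Finsupp.sum_fintype _ _ fun _ => rfl] at key
  simpa [Finsupp.ext_iff, funext_iff, Finsupp.single_apply, Pi.single_apply, eq_comm] using key

theorem eq_pi_single_iff {ι M : Type*} [DecidableEq ι] [Zero M] {f : ι → M} {a : ι} {b : M} :
    f = Pi.single a b ↔ f a = b ∧ ∀ x, x ≠ a → f x = 0 := by
  rw [eq_comm, Pi.single, Function.update_eq_iff]
  simp [eq_comm]

theorem Pi.single_left_injective {ι M : Type*} [DecidableEq ι] [Zero M] {b : M} (hb : b ≠ 0) :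
    Function.Injective fun a : ι => Pi.single a b := fun a a' h => by
  simpa [Pi.single_apply, hb] using congrFun h a

theorem sum_div_eq_one_div_iff {ι : Type*} [Fintype ι] {p : ι → ℕ} {d : ℕ}
    (hdvd : ∀ ℓ, p ℓ ∣ d) (hd : d ≠ 0) (i : ι → ℕ) :
    ∑ ℓ, (i ℓ : ℚ) / p ℓ = 1 / d ↔ ∑ ℓ, i ℓ * (d / p ℓ) = 1 := by
  have hp : ∀ ℓ, (p ℓ : ℚ) ≠ 0 := fun ℓ => by
    exact_mod_cast ne_zero_of_dvd_ne_zero hd (hdvd ℓ)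
  rw [← (mul_left_injective₀ (Nat.cast_ne_zero.mpr hd : (d : ℚ) ≠ 0)).eq_iff, ← @Nat.cast_inj ℚ]
  push_cast [Nat.cast_div (hdvd _) (hp _), Finset.sum_mul]
  rw [one_div_mul_cancel (by exact_mod_cast hd)]
  congr! 2 with ℓ
  ring

theorem exists_eq_pi_single_of_sum_mul_div_eq_one {ι : Type*} [Fintype ι] [DecidableEq ι]
    {p : ι → ℕ} {d : ℕ} (hdvd : ∀ ℓ, p ℓ ∣ d) (hd : d ≠ 0) {i : ι → ℕ}
    (h : ∑ ℓ, i ℓ * (d / p ℓ) = 1) : ∃ ℓ₀, p ℓ₀ = d ∧ i = Pi.single ℓ₀ 1 := by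
  obtain ⟨ℓ₀, hℓ₀⟩ := (Fintype.sum_eq_one_iff_eq_pi_single _).mp h
  rw [funext_iff] at hℓ₀
  have h₀ := hℓ₀ ℓ₀
  rw [Pi.single_eq_same, mul_eq_one] at h₀
  refine ⟨ℓ₀, Nat.eq_of_dvd_of_div_eq_one (hdvd ℓ₀) h₀.2,
    eq_pi_single_iff.mpr ⟨h₀.1, fun ℓ hℓ => ?_⟩⟩
  have hq : d / p ℓ ≠ 0 :=
    (Nat.div_ne_zero_iff_of_dvd (hdvd ℓ)).mpr ⟨hd, ne_zero_of_dvd_ne_zero hd (hdvd ℓ)⟩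
  simpa [Pi.single_eq_of_ne hℓ, hq] using hℓ₀ ℓ

theorem setOf_sum_div_eq_one_div {ι : Type*} [Fintype ι] [DecidableEq ι] {p : ι → ℕ} {d : ℕ}
    (hdvd : ∀ ℓ, p ℓ ∣ d) (hd : 1 < d) :
    {i : ι → ℕ | (∀ ℓ, i ℓ < p ℓ) ∧ ∑ ℓ, (i ℓ : ℚ) / p ℓ = 1 / d}
      = (fun ℓ₀ => Pi.single ℓ₀ 1) '' {ℓ₀ | p ℓ₀ = d} := by
  have hd0 : d ≠ 0 := by omega
  ext i
  simp only [Set.mem_ofPred_eq, Set.mem_image, sum_div_eq_one_div_iff hdvd hd0]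
  constructor
  · rintro ⟨-, h⟩
    obtain ⟨ℓ₀, hp, rfl⟩ := exists_eq_pi_single_of_sum_mul_div_eq_one hdvd hd0 h
    exact ⟨ℓ₀, hp, rfl⟩
  · rintro ⟨ℓ₀, hp, rfl⟩
    refine ⟨fun ℓ => ?_, ?_⟩
    · rcases eq_or_ne ℓ ℓ₀ with rfl | hℓ
      · simpa [hp] using hd
      · simpa [Pi.single_eq_of_ne hℓ] using Nat.pos_of_dvd_of_pos (hdvd ℓ) (by omega)
    · simp [Pi.single_apply, hp, Nat.div_self (by omega : 0 < d)]

theorem stmt_17_general (n : ℕ) (p : Fin n → ℕ)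
    (d : ℕ) (hd : d = Finset.univ.lcm p) (hd1 : 1 < d) :
    {i : Fin n → ℕ | (∀ ℓ, i ℓ < p ℓ) ∧ ∑ ℓ, (i ℓ : ℚ) / (p ℓ : ℚ) = 1 / (d : ℚ)}
      = {i : Fin n → ℕ | ∃ ℓ₀, p ℓ₀ = d ∧ i ℓ₀ = 1 ∧ ∀ ℓ, ℓ ≠ ℓ₀ → i ℓ = 0} ∧
    {i : Fin n → ℕ | (∀ ℓ, i ℓ < p ℓ) ∧ ∑ ℓ, (i ℓ : ℚ) / (p ℓ : ℚ) = 1 / (d : ℚ)}.ncard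
      = (Finset.univ.filter fun ℓ => p ℓ = d).card := by
  have hdvd : ∀ ℓ, p ℓ ∣ d := fun ℓ => hd ▸ Finset.dvd_lcm (Finset.mem_univ ℓ)
  have hsingles : {i : Fin n → ℕ | ∃ ℓ₀, p ℓ₀ = d ∧ i ℓ₀ = 1 ∧ ∀ ℓ, ℓ ≠ ℓ₀ → i ℓ = 0}
      = (fun ℓ₀ => Pi.single ℓ₀ 1) '' {ℓ₀ | p ℓ₀ = d} := by
    ext i
    simp only [Set.mem_ofPred_eq, Set.mem_image, eq_comm (b := i), eq_pi_single_iff]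
  rw [setOf_sum_div_eq_one_div hdvd hd1, hsingles,
    Set.ncard_image_of_injective _ (Pi.single_left_injective one_ne_zero)]
  refine ⟨rfl, ?_⟩
  rw [← Set.ncard_coe_finset, Finset.coe_filter]
  simp

/-- The solutions of ∑_ℓ i_ℓ/p_ℓ = 1/d (d = lcm of the p_ℓ, here d > 1 since
the relevant diffeomorphism is nontrivial) with 0 ≤ i_ℓ < p_ℓ are exactly the
tuples with i_ℓ = 1 at a single index ℓ with p_ℓ = d and i_ℓ = 0 elsewhere;
in particular their number is #{ℓ : p_ℓ = d}. -/
theorem stmt_17 (n : ℕ) (hn : 1 ≤ n) (p : Fin n → ℕ) (hp : ∀ ℓ, 0 < p ℓ)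
    (d : ℕ) (hd : d = Finset.univ.lcm p) (hd1 : 1 < d) :
    {i : Fin n → ℕ | (∀ ℓ, i ℓ < p ℓ) ∧ ∑ ℓ, (i ℓ : ℚ) / (p ℓ : ℚ) = 1 / (d : ℚ)}
      = {i : Fin n → ℕ | ∃ ℓ₀, p ℓ₀ = d ∧ i ℓ₀ = 1 ∧ ∀ ℓ, ℓ ≠ ℓ₀ → i ℓ = 0} ∧
    {i : Fin n → ℕ | (∀ ℓ, i ℓ < p ℓ) ∧ ∑ ℓ, (i ℓ : ℚ) / (p ℓ : ℚ) = 1 / (d : ℚ)}.ncard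
      = (Finset.univ.filter fun ℓ => p ℓ = d).card :=
  stmt_17_general n p d hd hd1
end
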